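/- Let the memoryless NEC have capacity C^DMC = (1−ε)log q − H(Z_1|Z̃_1), and let the NEC with stationary noise process {Z_i} have capacity C = (1−ε)log q − (H̄(Z) − H̄(Z̃)). If there exist z_1 ≠ z_1' in 𝒬 and z_2 ∈ 𝒬 ∪ {e} with P(Z_1=z_1) > 0, P(Z_1=z_1') > 0, and P(Z_2=z_2 | Z_1=z_1) ≠ P(Z_2=z_2 | Z_1=z_1'), and {Z_i} is first-order stationary Markov, then C > C^DMC. -/

import Mathlib

open Real BigOperators Finset

/-- Shannon entropy of a probability mass function on a finite alphabet. -/
noncomputable def entropy {α : Type*} [Fintype α] (p : α → ℝ) : ℝ :=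
  ∑ x, Real.negMulLog (p x)

/-- `p` is a probability mass function. -/
def IsPMF {α : Type*} [Fintype α] (p : α → ℝ) : Prop :=
  (∀ x, 0 ≤ p x) ∧ ∑ x, p x = 1

/-- Distribution (pushforward pmf) of a random variable `X` on a finite
probability space with pmf `μ`. -/
noncomputable def pdist {Ω α : Type*} [Fintype Ω] [DecidableEq α]
    (μ : Ω → ℝ) (X : Ω → α) (a : α) : ℝ :=
  ∑ ω, if X ω = a then μ ω else 0

/-- Shannon entropy `H(X)` of a random variable. -/
noncomputable def Hm {Ω α : Type*} [Fintype Ω] [Fintype α] [DecidableEq α]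
    (μ : Ω → ℝ) (X : Ω → α) : ℝ :=
  entropy (pdist μ X)

/-- Conditional entropy `H(X|Y) = H(X,Y) - H(Y)`. -/
noncomputable def condEnt {Ω α β : Type*} [Fintype Ω] [Fintype α] [Fintype β]
    [DecidableEq α] [DecidableEq β] (μ : Ω → ℝ) (X : Ω → α) (Y : Ω → β) : ℝ :=
  Hm μ (fun ω => (X ω, Y ω)) - Hm μ Y

/-- Mutual information `I(X;Y) = H(X) + H(Y) - H(X,Y)`. -/
noncomputable def mutInfo {Ω α β : Type*} [Fintype Ω] [Fintype α] [Fintype β]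
    [DecidableEq α] [DecidableEq β] (μ : Ω → ℝ) (X : Ω → α) (Y : Ω → β) : ℝ :=
  Hm μ X + Hm μ Y - Hm μ (fun ω => (X ω, Y ω))

/-- Conditional mutual information `I(X;Y|W) = H(X|W) + H(Y|W) - H(X,Y|W)`. -/
noncomputable def condMutInfo {Ω α β γ : Type*} [Fintype Ω] [Fintype α] [Fintype β]
    [Fintype γ] [DecidableEq α] [DecidableEq β] [DecidableEq γ]
    (μ : Ω → ℝ) (X : Ω → α) (Y : Ω → β) (W : Ω → γ) : ℝ :=
  condEnt μ X W + condEnt μ Y W - condEnt μ (fun ω => (X ω, Y ω)) W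

/-!
The memoryless capacity loses `H(Z₁ | Z̃₁) = H(Z₁) - H(Z̃₁)` per symbol, the channel with
memory loses the entropy-rate gap `H̄(Z) - H̄(Z̃)`. For a stationary process the block gap
`uₙ = H(Zⁿ) - H(Z̃ⁿ)` is subadditive: splitting a block in two and applying the data
processing inequality to the erasure map gives `I(Z̃ᵐ; Z̃ᵏ) ≤ I(Zᵐ; Zᵏ)`. By Fekete's lemma the
gap rate is at most `u₂ / 2 = H(Z₁) - H(Z̃₁) - (I(Z₁; Z₂) - I(Z̃₁; Z̃₂)) / 2`. The data
processing inequality is strict here: equality would force the joint law of `(Z₁, Z₂)` to be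
the one in which `Z₁` and `Z₂` are redrawn independently given their erasure patterns, and then
`P(Z₂ = z₂ | Z₁ = z)` could not depend on the non-erased value `z`.
-/

open InformationTheory

section Gibbs

lemma mul_log_sub_log_eq_sub_add_mul_klFun (p : ℝ) {q : ℝ} (hq : 0 < q) :
    p * (log p - log q) = p - q + q * klFun (p / q) := by
  rw [klFun_apply]
  rcases eq_or_ne p 0 with rfl | hp
  · simp
  · rw [log_div hp hq.ne']
    field_simp
    ring

lemma sub_le_mul_log_sub_log {p q : ℝ} (hp : 0 ≤ p) (hq : 0 ≤ q) (hpq : q = 0 → p = 0) :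
    p - q ≤ p * (log p - log q) := by
  rcases hq.eq_or_lt with hq0 | hq0
  · simp [hpq hq0.symm, ← hq0]
  · rw [mul_log_sub_log_eq_sub_add_mul_klFun p hq0]
    have := klFun_nonneg (div_nonneg hp hq0.le)
    nlinarith

lemma eq_of_mul_log_sub_log_eq_sub {p q : ℝ} (hp : 0 ≤ p) (hq : 0 ≤ q) (hpq : q = 0 → p = 0)
    (h : p * (log p - log q) = p - q) : p = q := by
  rcases hq.eq_or_lt with hq0 | hq0
  · rw [hpq hq0.symm, ← hq0]
  · rw [mul_log_sub_log_eq_sub_add_mul_klFun p hq0] at h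
    have hkl : klFun (p / q) = 0 := by simpa [hq0.ne'] using h
    rwa [klFun_eq_zero_iff (div_nonneg hp hq0.le), div_eq_one_iff_eq hq0.ne'] at hkl

variable {ι : Type*} [Fintype ι] {p q : ι → ℝ}

theorem sum_mul_log_sub_log_nonneg (hp : ∀ i, 0 ≤ p i) (hq : ∀ i, 0 ≤ q i)
    (hpq : ∀ i, q i = 0 → p i = 0) (hsum : ∑ i, q i ≤ ∑ i, p i) :
    0 ≤ ∑ i, p i * (log (p i) - log (q i)) :=
  calc 0 ≤ ∑ i, (p i - q i) := by rw [Finset.sum_sub_distrib]; linarith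
    _ ≤ _ := Finset.sum_le_sum fun i _ => sub_le_mul_log_sub_log (hp i) (hq i) (hpq i)

theorem eq_of_sum_mul_log_sub_log_eq_zero (hp : ∀ i, 0 ≤ p i) (hq : ∀ i, 0 ≤ q i)
    (hpq : ∀ i, q i = 0 → p i = 0) (hsum : ∑ i, q i ≤ ∑ i, p i)
    (h : ∑ i, p i * (log (p i) - log (q i)) = 0) : p = q := by
  have hexcess : ∑ i, (p i * (log (p i) - log (q i)) - (p i - q i)) = 0 := by
    refine le_antisymm ?_ (Finset.sum_nonneg fun i _ =>
      sub_nonneg.2 (sub_le_mul_log_sub_log (hp i) (hq i) (hpq i)))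
    rw [Finset.sum_sub_distrib, h, Finset.sum_sub_distrib]
    linarith
  rw [Finset.sum_eq_zero_iff_of_nonneg fun i _ =>
    sub_nonneg.2 (sub_le_mul_log_sub_log (hp i) (hq i) (hpq i))] at hexcess
  funext i
  exact eq_of_mul_log_sub_log_eq_sub (hp i) (hq i) (hpq i)
    (sub_eq_zero.1 (hexcess i (Finset.mem_univ i)))

end Gibbs

section Pushforward

variable {Ω α β : Type*} [Fintype Ω] [DecidableEq α] [DecidableEq β] {μ : Ω → ℝ}

lemma pdist_nonneg (hμ : ∀ ω, 0 ≤ μ ω) (X : Ω → α) (a : α) : 0 ≤ pdist μ X a :=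
  Finset.sum_nonneg fun ω _ => by split_ifs <;> simp [hμ ω]

lemma le_pdist_apply (hμ : ∀ ω, 0 ≤ μ ω) (X : Ω → α) (ω : Ω) : μ ω ≤ pdist μ X (X ω) := by
  have := Finset.single_le_sum (f := fun ω' => if X ω' = X ω then μ ω' else 0)
    (fun ω' _ => by split_ifs <;> simp [hμ ω']) (Finset.mem_univ ω)
  simpa [pdist] using this

lemma pdist_apply_pos (hμ : ∀ ω, 0 ≤ μ ω) {ω : Ω} (hω : 0 < μ ω) (X : Ω → α) :
    0 < pdist μ X (X ω) :=
  hω.trans_le (le_pdist_apply hμ X ω)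

lemma exists_pos_of_pdist_ne_zero (hμ : ∀ ω, 0 ≤ μ ω) {X : Ω → α} {a : α}
    (h : pdist μ X a ≠ 0) : ∃ ω, X ω = a ∧ 0 < μ ω := by
  obtain ⟨ω, -, hω⟩ := Finset.exists_ne_zero_of_sum_ne_zero h
  by_cases hX : X ω = a
  · exact ⟨ω, hX, (hμ ω).lt_of_ne (by simpa [hX, eq_comm] using hω)⟩
  · simp [hX] at hω

lemma sum_pdist_mul [Fintype α] (X : Ω → α) (F : α → ℝ) :
    ∑ a, pdist μ X a * F a = ∑ ω, μ ω * F (X ω) := by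
  simp only [pdist, Finset.sum_mul, ite_mul, zero_mul]
  rw [Finset.sum_comm]
  simp

lemma sum_pdist [Fintype α] (X : Ω → α) : ∑ a, pdist μ X a = ∑ ω, μ ω := by
  simpa using sum_pdist_mul (μ := μ) X (fun _ => 1)

lemma sum_pdist_mul_comp [Fintype α] [Fintype β] (X : Ω → α) (f : α → β) (F : β → ℝ) :
    ∑ a, pdist μ X a * F (f a) = ∑ b, pdist μ (fun ω => f (X ω)) b * F b := by
  rw [sum_pdist_mul, sum_pdist_mul]

lemma pdist_comp_eq_sum [Fintype α] (X : Ω → α) (f : α → β) (b : β) :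
    pdist μ (fun ω => f (X ω)) b = ∑ a, pdist μ X a * if f a = b then 1 else 0 := by
  rw [sum_pdist_mul]
  simp [pdist]

lemma pdist_comp_congr [Fintype α] {Ω' : Type*} [Fintype Ω'] {μ' : Ω' → ℝ} {X : Ω → α}
    {X' : Ω' → α} (h : pdist μ X = pdist μ' X') (f : α → β) :
    pdist μ (fun ω => f (X ω)) = pdist μ' (fun ω => f (X' ω)) := by
  funext b
  rw [pdist_comp_eq_sum, pdist_comp_eq_sum, h]

lemma Hm_eq_neg_sum_mul_log [Fintype α] (X : Ω → α) :
    Hm μ X = -∑ ω, μ ω * log (pdist μ X (X ω)) := by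
  rw [← sum_pdist_mul X (fun a => log (pdist μ X a))]
  simp [Hm, entropy, negMulLog, Finset.sum_neg_distrib]

lemma Hm_comp_of_injective [Fintype α] [Fintype β] (X : Ω → α) {f : α → β}
    (hf : Function.Injective f) : Hm μ (fun ω => f (X ω)) = Hm μ X := by
  have hpdist : ∀ a, pdist μ (fun ω => f (X ω)) (f a) = pdist μ X a := by
    simp [pdist, hf.eq_iff]
  refine (Fintype.sum_of_injective f hf _ _ ?_ fun a => by rw [hpdist]).symm
  rintro b hb
  have : pdist μ (fun ω => f (X ω)) b = 0 :=
    Finset.sum_eq_zero fun ω _ => if_neg fun h => hb ⟨X ω, h⟩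
  simp [this]

lemma condEnt_comp_self [Fintype α] [Fintype β] (X : Ω → α) (f : α → β) :
    condEnt μ X (fun ω => f (X ω)) = Hm μ X - Hm μ (fun ω => f (X ω)) := by
  rw [condEnt, Hm_comp_of_injective X (f := fun a => (a, f a)) fun a b h => congrArg Prod.fst h]

end Pushforward

section DataProcessing

variable {Ω α β γ δ : Type*} [Fintype Ω]
  [DecidableEq α] [DecidableEq β] [DecidableEq γ] [DecidableEq δ]
  {μ : Ω → ℝ} (X : Ω → α) (Y : Ω → β) (f : α → γ) (g : β → δ)

/-- The law of `(X, Y)` when `(f X, g Y)` is drawn from its joint law and then `X` and `Y` are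
drawn independently from their conditional laws given `f X` and `g Y`. -/
noncomputable def resampledJoint (μ : Ω → ℝ) (z : α × β) : ℝ :=
  pdist μ X z.1 * pdist μ Y z.2 * (pdist μ (fun ω => (f (X ω), g (Y ω))) (f z.1, g z.2)
    / (pdist μ (fun ω => f (X ω)) (f z.1) * pdist μ (fun ω => g (Y ω)) (g z.2)))

lemma resampledJoint_nonneg (hμ : ∀ ω, 0 ≤ μ ω) (z : α × β) :
    0 ≤ resampledJoint X Y f g μ z :=
  mul_nonneg (mul_nonneg (pdist_nonneg hμ _ _) (pdist_nonneg hμ _ _))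
    (div_nonneg (pdist_nonneg hμ _ _) (mul_nonneg (pdist_nonneg hμ _ _) (pdist_nonneg hμ _ _)))

section
variable {X Y f g}

lemma resampledJoint_pos (hμ : ∀ ω, 0 ≤ μ ω) {ω : Ω} (hω : 0 < μ ω) :
    0 < resampledJoint X Y f g μ (X ω, Y ω) :=
  mul_pos (mul_pos (pdist_apply_pos hμ hω X) (pdist_apply_pos hμ hω Y))
    (div_pos (pdist_apply_pos hμ hω _)
      (mul_pos (pdist_apply_pos hμ hω _) (pdist_apply_pos hμ hω _)))

lemma log_resampledJoint (hμ : ∀ ω, 0 ≤ μ ω) {ω : Ω} (hω : 0 < μ ω) :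
    log (resampledJoint X Y f g μ (X ω, Y ω))
      = log (pdist μ X (X ω)) + log (pdist μ Y (Y ω))
        + log (pdist μ (fun ω => (f (X ω), g (Y ω))) (f (X ω), g (Y ω)))
        - log (pdist μ (fun ω => f (X ω)) (f (X ω)))
        - log (pdist μ (fun ω => g (Y ω)) (g (Y ω))) := by
  have hX := (pdist_apply_pos hμ hω X).ne'
  have hY := (pdist_apply_pos hμ hω Y).ne'
  have hFG := (pdist_apply_pos hμ hω fun ω => (f (X ω), g (Y ω))).ne'
  have hfX := (pdist_apply_pos hμ hω fun ω => f (X ω)).ne'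
  have hgY := (pdist_apply_pos hμ hω fun ω => g (Y ω)).ne'
  rw [resampledJoint, log_mul (mul_ne_zero hX hY) (div_ne_zero hFG (mul_ne_zero hfX hgY)),
    log_mul hX hY, log_div hFG (mul_ne_zero hfX hgY), log_mul hfX hgY]
  ring

end

lemma pdist_eq_zero_of_resampledJoint_eq_zero (hμ : ∀ ω, 0 ≤ μ ω) (z : α × β)
    (hz : resampledJoint X Y f g μ z = 0) : pdist μ (fun ω => (X ω, Y ω)) z = 0 := by
  by_contra h
  obtain ⟨ω, rfl, hω⟩ := exists_pos_of_pdist_ne_zero hμ h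
  exact (resampledJoint_pos hμ hω).ne' hz

section
variable [Fintype α] [Fintype β] [Fintype γ] [Fintype δ]

lemma sum_resampledJoint_le_one (hμ : IsPMF μ) : ∑ z, resampledJoint X Y f g μ z ≤ 1 := by
  set r : γ → δ → ℝ := fun c d => pdist μ (fun ω => (f (X ω), g (Y ω))) (c, d)
    / (pdist μ (fun ω => f (X ω)) c * pdist μ (fun ω => g (Y ω)) d) with hr
  have hterm : ∀ c d, pdist μ (fun ω => f (X ω)) c * (pdist μ (fun ω => g (Y ω)) d * r c d)
      ≤ pdist μ (fun ω => (f (X ω), g (Y ω))) (c, d) := by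
    intro c d
    rw [← mul_assoc]
    rcases eq_or_ne (pdist μ (fun ω => f (X ω)) c * pdist μ (fun ω => g (Y ω)) d) 0 with h | h
    · rw [h, zero_mul]; exact pdist_nonneg hμ.1 _ _
    · exact (mul_div_cancel₀ _ h).le
  calc ∑ z, resampledJoint X Y f g μ z
      = ∑ x, pdist μ X x * ∑ y, pdist μ Y y * r (f x) (g y) := by
        rw [Fintype.sum_prod_type]
        refine Finset.sum_congr rfl fun x _ => ?_
        rw [Finset.mul_sum]
        refine Finset.sum_congr rfl fun y _ => ?_
        rw [resampledJoint, hr]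
        ring
    _ = ∑ x, pdist μ X x * ∑ d, pdist μ (fun ω => g (Y ω)) d * r (f x) d := by
        simp only [sum_pdist_mul_comp Y g]
    _ = ∑ c, pdist μ (fun ω => f (X ω)) c * ∑ d, pdist μ (fun ω => g (Y ω)) d * r c d :=
        sum_pdist_mul_comp X f (fun c => ∑ d, pdist μ (fun ω => g (Y ω)) d * r c d)
    _ ≤ ∑ c, ∑ d, pdist μ (fun ω => (f (X ω), g (Y ω))) (c, d) := by
        simp only [Finset.mul_sum]
        exact Finset.sum_le_sum fun c _ => Finset.sum_le_sum fun d _ => hterm c d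
    _ = 1 := by rw [← Fintype.sum_prod_type', sum_pdist, hμ.2]

theorem mutInfo_sub_mutInfo_comp (hμ : ∀ ω, 0 ≤ μ ω) :
    mutInfo μ X Y - mutInfo μ (fun ω => f (X ω)) (fun ω => g (Y ω))
      = ∑ z, pdist μ (fun ω => (X ω, Y ω)) z
          * (log (pdist μ (fun ω => (X ω, Y ω)) z) - log (resampledJoint X Y f g μ z)) := by
  rw [sum_pdist_mul (fun ω => (X ω, Y ω))
    (fun z => log (pdist μ (fun ω => (X ω, Y ω)) z) - log (resampledJoint X Y f g μ z))]
  have hterm : ∀ ω, μ ω * (log (pdist μ (fun ω => (X ω, Y ω)) (X ω, Y ω))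
        - log (resampledJoint X Y f g μ (X ω, Y ω)))
      = μ ω * log (pdist μ (fun ω => (X ω, Y ω)) (X ω, Y ω)) - μ ω * log (pdist μ X (X ω))
        - μ ω * log (pdist μ Y (Y ω))
        - μ ω * log (pdist μ (fun ω => (f (X ω), g (Y ω))) (f (X ω), g (Y ω)))
        + μ ω * log (pdist μ (fun ω => f (X ω)) (f (X ω)))
        + μ ω * log (pdist μ (fun ω => g (Y ω)) (g (Y ω))) := by
    intro ω
    rcases (hμ ω).eq_or_lt with h0 | hω
    · simp [← h0]
    · rw [log_resampledJoint hμ hω]; ring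
  simp only [hterm, Finset.sum_add_distrib, Finset.sum_sub_distrib, mutInfo,
    Hm_eq_neg_sum_mul_log]
  ring

theorem mutInfo_comp_le (hμ : IsPMF μ) :
    mutInfo μ (fun ω => f (X ω)) (fun ω => g (Y ω)) ≤ mutInfo μ X Y := by
  have := sum_mul_log_sub_log_nonneg (pdist_nonneg hμ.1 _) (resampledJoint_nonneg X Y f g hμ.1)
    (pdist_eq_zero_of_resampledJoint_eq_zero X Y f g hμ.1)
    (by rw [sum_pdist, hμ.2]; exact sum_resampledJoint_le_one X Y f g hμ)
  linarith [mutInfo_sub_mutInfo_comp X Y f g hμ.1]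

theorem pdist_eq_resampledJoint_of_mutInfo_comp_eq (hμ : IsPMF μ)
    (h : mutInfo μ (fun ω => f (X ω)) (fun ω => g (Y ω)) = mutInfo μ X Y) :
    pdist μ (fun ω => (X ω, Y ω)) = resampledJoint X Y f g μ :=
  eq_of_sum_mul_log_sub_log_eq_zero (pdist_nonneg hμ.1 _) (resampledJoint_nonneg X Y f g hμ.1)
    (pdist_eq_zero_of_resampledJoint_eq_zero X Y f g hμ.1)
    (by rw [sum_pdist, hμ.2]; exact sum_resampledJoint_le_one X Y f g hμ)
    (by rw [← mutInfo_sub_mutInfo_comp X Y f g hμ.1, h, sub_self])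

/-- `hxy` says `P(Y = y | X = x) ≠ P(Y = y | X = x')`, cross-multiplied. -/
theorem mutInfo_comp_lt (hμ : IsPMF μ) {x x' : α} {y : β} (hfx : f x = f x')
    (hxy : pdist μ (fun ω => (X ω, Y ω)) (x, y) * pdist μ X x'
      ≠ pdist μ (fun ω => (X ω, Y ω)) (x', y) * pdist μ X x) :
    mutInfo μ (fun ω => f (X ω)) (fun ω => g (Y ω)) < mutInfo μ X Y := by
  refine (mutInfo_comp_le X Y f g hμ).lt_of_ne fun h => hxy ?_
  rw [pdist_eq_resampledJoint_of_mutInfo_comp_eq X Y f g hμ h, resampledJoint, resampledJoint]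
  simp only [hfx]
  ring

end

end DataProcessing

section Stationary

variable {Ω α β : Type*} [Fintype Ω] [Fintype α] [Fintype β] [DecidableEq α] [DecidableEq β]
  {μ : Ω → ℝ}

def IsStationaryProcess (μ : Ω → ℝ) (Z : ℕ → Ω → α) : Prop :=
  ∀ k n : ℕ, pdist μ (fun ω => fun i : Fin n => Z (k + i.1) ω)
    = pdist μ (fun ω => fun i : Fin n => Z i.1 ω)

lemma Hm_block_two (W : ℕ → Ω → α) :
    Hm μ (fun ω (i : Fin 2) => W i ω) = Hm μ (fun ω => (W 0 ω, W 1 ω)) :=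
  (Hm_comp_of_injective _ (finTwoArrowEquiv α).injective).symm

lemma Hm_block_add (W : ℕ → Ω → α) (m k : ℕ) :
    Hm μ (fun ω (i : Fin (m + k)) => W i ω)
      = Hm μ (fun ω => ((fun i : Fin m => W i ω), (fun j : Fin k => W (m + j) ω))) :=
  (Hm_comp_of_injective _ (Fin.appendEquiv m k).symm.injective).symm

namespace IsStationaryProcess

variable {Z : ℕ → Ω → α}

lemma pdist_eq (hZ : IsStationaryProcess μ Z) (k : ℕ) : pdist μ (Z k) = pdist μ (Z 0) := by
  simpa using pdist_comp_congr (hZ k 1) (fun v => v 0)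

lemma subadditive_Hm_sub_Hm_comp (hZ : IsStationaryProcess μ Z) (hμ : IsPMF μ) (φ : α → β) :
    Subadditive fun n =>
      Hm μ (fun ω (i : Fin n) => Z i ω) - Hm μ (fun ω (i : Fin n) => φ (Z i ω)) := by
  intro m k
  have hdpi := mutInfo_comp_le (fun ω (i : Fin m) => Z i ω) (fun ω (j : Fin k) => Z (m + j) ω)
    (fun v i => φ (v i)) (fun v j => φ (v j)) hμ
  have hshift : Hm μ (fun ω (j : Fin k) => Z (m + j) ω) = Hm μ (fun ω (j : Fin k) => Z j ω) :=
    congrArg entropy (hZ m k)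
  have hshiftφ : Hm μ (fun ω (j : Fin k) => φ (Z (m + j) ω))
      = Hm μ (fun ω (j : Fin k) => φ (Z j ω)) :=
    congrArg entropy (pdist_comp_congr (hZ m k) fun v j => φ (v j))
  rw [mutInfo, mutInfo] at hdpi
  dsimp only
  rw [Hm_block_add Z, Hm_block_add fun i ω => φ (Z i ω)]
  linarith

theorem lim_le_half_of_tendsto (hZ : IsStationaryProcess μ Z) (hμ : IsPMF μ) (φ : α → β) {L : ℝ}
    (hL : Filter.Tendsto (fun n : ℕ =>
      (Hm μ (fun ω (i : Fin n) => Z i ω) - Hm μ (fun ω (i : Fin n) => φ (Z i ω))) / n)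
      Filter.atTop (nhds L)) :
    L ≤ (Hm μ (fun ω => (Z 0 ω, Z 1 ω)) - Hm μ (fun ω => (φ (Z 0 ω), φ (Z 1 ω)))) / 2 := by
  have hsub := hZ.subadditive_Hm_sub_Hm_comp hμ φ
  rw [tendsto_nhds_unique hL (hsub.tendsto_lim hL.bddBelow_range), ← Hm_block_two,
    ← Hm_block_two (fun i ω => φ (Z i ω))]
  exact_mod_cast hsub.lim_le_div hL.bddBelow_range two_ne_zero

end IsStationaryProcess

end Stationary

theorem stmt16_general {Ω : Type*} [Fintype Ω] {q : ℕ}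
    (μ : Ω → ℝ) (hμ : IsPMF μ)
    (Z : ℕ → Ω → Option (Fin q))
    (hstat : ∀ k n : ℕ, pdist μ (fun ω => fun i : Fin n => Z (k + i.1) ω)
      = pdist μ (fun ω => fun i : Fin n => Z i.1 ω))
    (z₁ z₁' : Fin q) (z₂ : Option (Fin q))
    (hdiff : pdist μ (fun ω => (Z 0 ω, Z 1 ω)) (some z₁, z₂)
        * pdist μ (Z 0) (some z₁')
      ≠ pdist μ (fun ω => (Z 0 ω, Z 1 ω)) (some z₁', z₂)
        * pdist μ (Z 0) (some z₁))
    (hz hzt : ℝ)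
    (hHZ : Filter.Tendsto
      (fun n : ℕ => Hm μ (fun ω => fun i : Fin n => Z i.1 ω) / (n : ℝ))
      Filter.atTop (nhds hz))
    (hHZt : Filter.Tendsto
      (fun n : ℕ => Hm μ (fun ω => fun i : Fin n => (Z i.1 ω).isNone) / (n : ℝ))
      Filter.atTop (nhds hzt)) :
    (1 - pdist μ (Z 0) none) * Real.log (q : ℝ) - (hz - hzt)
      > (1 - pdist μ (Z 0) none) * Real.log (q : ℝ)
        - condEnt μ (Z 0) (fun ω => (Z 0 ω).isNone) := by
  have hrate : hz - hzt ≤ (Hm μ (fun ω => (Z 0 ω, Z 1 ω))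
      - Hm μ (fun ω => ((Z 0 ω).isNone, (Z 1 ω).isNone))) / 2 :=
    IsStationaryProcess.lim_le_half_of_tendsto hstat hμ Option.isNone
      (by simpa only [sub_div] using hHZ.sub hHZt)
  have hstrict := mutInfo_comp_lt (Z 0) (Z 1) Option.isNone Option.isNone hμ
    (x := some z₁) (x' := some z₁') rfl hdiff
  have hZ1 : Hm μ (Z 1) = Hm μ (Z 0) := congrArg entropy (IsStationaryProcess.pdist_eq hstat 1)
  have hZ1t : Hm μ (fun ω => (Z 1 ω).isNone) = Hm μ (fun ω => (Z 0 ω).isNone) :=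
    congrArg entropy (pdist_comp_congr (IsStationaryProcess.pdist_eq hstat 1) Option.isNone)
  rw [mutInfo, mutInfo] at hstrict
  rw [condEnt_comp_self]
  linarith

/-- for an NEC with stationary first-order Markov noise-erasure
process whose transition kernel genuinely varies with the conditioning state
(on two positive-probability non-erasure states), the capacity with memory
`(1-ε) log q - (H̄(Z) - H̄(Z̃))` strictly exceeds the capacity
`(1-ε) log q - H(Z_1|Z̃_1)` of the memoryless counterpart. -/
theorem stmt16 {Ω : Type*} [Fintype Ω] {q : ℕ}
    (μ : Ω → ℝ) (hμ : IsPMF μ)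
    (Z : ℕ → Ω → Option (Fin q))
    (hstat : ∀ k n : ℕ, pdist μ (fun ω => fun i : Fin n => Z (k + i.1) ω)
      = pdist μ (fun ω => fun i : Fin n => Z i.1 ω))
    (hmarkov : ∀ (n : ℕ) (w : Fin n → Option (Fin q)) (a b : Option (Fin q)),
      pdist μ (fun ω => ((fun i : Fin n => Z i.1 ω), Z n ω, Z (n+1) ω)) (w, a, b)
          * pdist μ (Z n) a
        = pdist μ (fun ω => ((fun i : Fin n => Z i.1 ω), Z n ω)) (w, a)
          * pdist μ (fun ω => (Z n ω, Z (n+1) ω)) (a, b))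
    (z₁ z₁' : Fin q) (z₂ : Option (Fin q)) (hne : z₁ ≠ z₁')
    (hp1 : 0 < pdist μ (Z 0) (some z₁)) (hp2 : 0 < pdist μ (Z 0) (some z₁'))
    (hdiff : pdist μ (fun ω => (Z 0 ω, Z 1 ω)) (some z₁, z₂)
        * pdist μ (Z 0) (some z₁')
      ≠ pdist μ (fun ω => (Z 0 ω, Z 1 ω)) (some z₁', z₂)
        * pdist μ (Z 0) (some z₁))
    (hz hzt : ℝ)
    (hHZ : Filter.Tendsto
      (fun n : ℕ => Hm μ (fun ω => fun i : Fin n => Z i.1 ω) / (n : ℝ))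
      Filter.atTop (nhds hz))
    (hHZt : Filter.Tendsto
      (fun n : ℕ => Hm μ (fun ω => fun i : Fin n => (Z i.1 ω).isNone) / (n : ℝ))
      Filter.atTop (nhds hzt)) :
    (1 - pdist μ (Z 0) none) * Real.log (q : ℝ) - (hz - hzt)
      > (1 - pdist μ (Z 0) none) * Real.log (q : ℝ)
        - condEnt μ (Z 0) (fun ω => (Z 0 ω).isNone) :=
  stmt16_general μ hμ Z hstat z₁ z₁' z₂ hdiff hz hzt hHZ hHZt
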